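/- If a family of open half-planes in R^2 covers R^2, then there exist at most three of them whose union is R^2; moreover, if exactly two suffice, those two are parallel (opposite) half-planes. -/

import Mathlib

open scoped RealInnerProductSpace

/-- The open half-plane `{x ∈ ℝ² | ⟪u, x⟫ > c}` determined by a normal vector
`u` and a threshold `c`. -/
noncomputable def openHalfPlane (u : EuclideanSpace ℝ (Fin 2)) (c : ℝ) :
    Set (EuclideanSpace ℝ (Fin 2)) := {x | c < ⟪u, x⟫}

/-!
Complements of open half-planes are convex, so Helly's theorem in dimension `2`, applied to the
complements, shows that a finite cover has a subcover by `3` half-planes.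

If the normals `u`, `v` of two open half-spaces `⟪u, x⟫ > c`, `⟪v, x⟫ > d` are not
antiparallel, then `y = ‖v‖ • u + ‖u‖ • v` has `⟪u, y⟫ > 0` and `⟪v, y⟫ > 0` by the equality
case of Cauchy–Schwarz, so the points `-s • y` lie in neither half-space for `s` large.
-/

open Set Finset Filter Module

theorem Convex.exists_subcover_card_le_finrank_add_one {ι 𝕜 E : Type*} [Field 𝕜]
    [LinearOrder 𝕜] [IsStrictOrderedRing 𝕜] [AddCommGroup E] [Module 𝕜 E] [FiniteDimensional 𝕜 E]
    {F : ι → Set E} {s : Finset ι} (h_convex : ∀ i ∈ s, Convex 𝕜 (F i)ᶜ)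
    (h_cover : ⋃ i ∈ s, F i = univ) :
    ∃ I ⊆ s, #I ≤ finrank 𝕜 E + 1 ∧ ⋃ i ∈ I, F i = univ := by
  by_contra! h
  have h_inter := Convex.helly_theorem' h_convex fun I hI hcard => by
    rw [← compl_iUnion₂, nonempty_compl]
    exact h I hI hcard
  rw [← compl_iUnion₂, nonempty_compl] at h_inter
  exact h_inter h_cover

theorem convex_compl_openHalfPlane (u : EuclideanSpace ℝ (Fin 2)) (c : ℝ) :
    Convex ℝ (openHalfPlane u c)ᶜ := by
  have h_compl : (openHalfPlane u c)ᶜ = {x | ⟪u, x⟫ ≤ c} := by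
    ext
    simp [openHalfPlane]
  exact h_compl ▸ convex_halfSpace_le (innerₗ _ u).isLinear c

section InnerProductSpace

variable {F : Type*} [NormedAddCommGroup F] [InnerProductSpace ℝ F]

theorem exists_inner_le_and_inner_le_of_inner_pos {u v y : F} (hu : 0 < ⟪u, y⟫)
    (hv : 0 < ⟪v, y⟫) (c d : ℝ) : ∃ x, ⟪u, x⟫ ≤ c ∧ ⟪v, x⟫ ≤ d := by
  have tendsto_inner {w : F} (hw : 0 < ⟪w, y⟫) :
      Tendsto (fun s : ℝ => ⟪w, (-s) • y⟫) atTop atBot := by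
    simpa only [real_inner_smul_right] using tendsto_neg_atTop_atBot.atBot_mul_const hw
  obtain ⟨s, hs⟩ := ((tendsto_inner hu).eventually_le_atBot c).and
    ((tendsto_inner hv).eventually_le_atBot d) |>.exists
  exact ⟨_, hs⟩

theorem exists_neg_smul_of_forall_lt_inner_or_lt_inner {u v : F} (hu : u ≠ 0) (hv : v ≠ 0)
    {c d : ℝ} (h : ∀ x, c < ⟪u, x⟫ ∨ d < ⟪v, x⟫) : ∃ t : ℝ, t < 0 ∧ v = t • u := by
  refine (InnerProductGeometry.angle_eq_pi_iff.1 ?_).2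
  rw [← InnerProductGeometry.inner_eq_neg_mul_norm_iff_angle_eq_pi hu hv]
  by_contra hne
  have hlt : -(‖u‖ * ‖v‖) < ⟪u, v⟫ :=
    (neg_le_of_abs_le (abs_real_inner_le_norm u v)).lt_of_ne' hne
  have hu' := norm_pos_iff.2 hu
  have hv' := norm_pos_iff.2 hv
  have huy : 0 < ⟪u, ‖v‖ • u + ‖u‖ • v⟫ := by
    rw [inner_add_right, real_inner_smul_right, real_inner_smul_right,
      real_inner_self_eq_norm_sq]
    nlinarith
  have hvy : 0 < ⟪v, ‖v‖ • u + ‖u‖ • v⟫ := by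
    rw [inner_add_right, real_inner_smul_right, real_inner_smul_right, real_inner_self_eq_norm_sq,
      real_inner_comm]
    nlinarith
  obtain ⟨x, hux, hvx⟩ := exists_inner_le_and_inner_le_of_inner_pos huy hvy c d
  rcases h x with h | h <;> linarith

end InnerProductSpace

theorem halfplanes_cover_plane_general
    (S : Finset ((EuclideanSpace ℝ (Fin 2)) × ℝ))
    (hcover : (⋃ p ∈ S, openHalfPlane p.1 p.2) = Set.univ) :
    (∃ R ⊆ S, R.card ≤ 3 ∧ (⋃ p ∈ R, openHalfPlane p.1 p.2) = Set.univ) ∧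
    (∀ u v : EuclideanSpace ℝ (Fin 2), ∀ c d : ℝ, u ≠ 0 → v ≠ 0 →
      openHalfPlane u c ∪ openHalfPlane v d = Set.univ →
      ∃ t : ℝ, t < 0 ∧ v = t • u) := by
  refine ⟨?_, fun u v c d hu hv h => ?_⟩
  · simpa [finrank_euclideanSpace] using Convex.exists_subcover_card_le_finrank_add_one
      (𝕜 := ℝ) (fun p _ => convex_compl_openHalfPlane p.1 p.2) hcover
  · exact exists_neg_smul_of_forall_lt_inner_or_lt_inner hu hv fun x =>
      (h ▸ mem_univ x : x ∈ openHalfPlane u c ∪ openHalfPlane v d)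

/-- If a finite family of open half-planes covers `ℝ²`, then at most three of
them already cover `ℝ²`; moreover, whenever two open half-planes cover `ℝ²`,
they are parallel opposite half-planes (their normals are negative multiples
of each other). -/
theorem halfplanes_cover_plane
    (S : Finset ((EuclideanSpace ℝ (Fin 2)) × ℝ)) (hS : ∀ p ∈ S, p.1 ≠ 0)
    (hcover : (⋃ p ∈ S, openHalfPlane p.1 p.2) = Set.univ) :
    (∃ R ⊆ S, R.card ≤ 3 ∧ (⋃ p ∈ R, openHalfPlane p.1 p.2) = Set.univ) ∧
    (∀ u v : EuclideanSpace ℝ (Fin 2), ∀ c d : ℝ, u ≠ 0 → v ≠ 0 →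
      openHalfPlane u c ∪ openHalfPlane v d = Set.univ →
      ∃ t : ℝ, t < 0 ∧ v = t • u) :=
  halfplanes_cover_plane_general S hcover
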